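/- arXiv:0810.4518 — 4 statements merged into one kernel-verified Lean document; each statement's English description precedes it below -/
import Mathlib

section
/- Let k be an algebraically closed field of characteristic p > 0 and let d ≥ 1. Let R be a standard-graded k-algebra and let φ : P → R be an injective degree-preserving k-algebra homomorphism from the standard-graded polynomial ring P = k[x_0, …, x_d] such that R is a finitely generated P-module (a graded Noether normalization; in particular R has Krull dimension d+1). Let n ≥ d+1, let g_1, …, g_n ∈ P be homogeneous of degrees a_1, …, a_n, and let m ∈ ℕ be such that every homogeneous polynomial of degree m lies in the ideal (g_1, …, g_n) of P. Then every homogeneous element of R of degree m + d lies in the tight closure of the ideal (φ(g_1), …, φ(g_n)) of R. -/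
open scoped BigOperators

/-- The `q`-th bracket power `I^{[q]}` of an ideal: the ideal generated by all `q`-th
powers of elements of `I`. -/
def bracketPow {R : Type*} [CommRing R] (I : Ideal R) (q : ℕ) : Ideal R :=
  Ideal.span ((fun f => f ^ q) '' (I : Set R))

/-- Tight closure of an ideal in a ring of characteristic `p`. -/
def tightClosure {R : Type*} [CommRing R] (p : ℕ) (I : Ideal R) : Set R :=
  {x | ∃ u : R, (∀ P ∈ minimalPrimes R, u ∉ P) ∧
    ∃ e₀ : ℕ, ∀ e : ℕ, e₀ ≤ e → u * x ^ p ^ e ∈ bracketPow I (p ^ e)}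

/-!
Write `q = p ^ e`. Splitting each exponent vector of a monomial of degree `t` as `q β + ρ` with
`0 ≤ ρ_i < q`, a count over the `d + 1` variables gives `deg β ≥ m` once `q (m + d) ≤ t + d`, so
every form of degree `t` lies in `(g)^{[q]}`. As `R` is generated over `P` by finitely many
elements of degree `< C`, every element of `R` of degree `≥ q (m + d) + C` lies in
`(φ g)^{[q]}`; hence `u r^q ∈ (φ g)^{[q]}` for all `u ∈ R_C`, `r ∈ R_{m+d}`. Finally, a minimal
prime containing `R_C` would contain `R_+` and force the degree-one element `φ x_0` to be
nilpotent, so by prime avoidance the ideal `R_C R` contains an element outside all minimal primes.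
-/

namespace Finsupp

theorem degree_add_card_le_mul_degree_div {σ : Type*} [Fintype σ] (α : σ →₀ ℕ) {q : ℕ}
    (hq : 0 < q) :
    α.degree + Fintype.card σ ≤
      q * (α.mapRange (· / q) (Nat.zero_div q)).degree + Fintype.card σ * q := by
  have key : ∑ i, (α i + 1) ≤ ∑ i, (q * (α i / q) + q) := Finset.sum_le_sum fun i _ => by
    have := Nat.div_add_mod (α i) q
    have := Nat.mod_lt (α i) hq
    omega
  simpa [degree_eq_sum, Finset.sum_add_distrib, Finset.mul_sum] using key

end Finsupp

namespace MvPolynomial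

theorem mem_bracketPow_of_isHomogeneous {σ k : Type*} [Fintype σ] [CommRing k] {d m q t : ℕ}
    (hσ : Fintype.card σ = d + 1) (hq : 0 < q) {I : Ideal (MvPolynomial σ k)}
    (hI : ∀ f : MvPolynomial σ k, f.IsHomogeneous m → f ∈ I)
    {f : MvPolynomial σ k} (hf : f.IsHomogeneous t) (ht : q * (m + d) ≤ t + d) :
    f ∈ bracketPow I q := by
  classical
  rw [← support_sum_monomial_coeff f]
  refine Ideal.sum_mem _ fun α hα => ?_
  set β := α.mapRange (· / q) (Nat.zero_div q)
  have hmβ : m ≤ β.degree := by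
    have hαt : α.degree = t := by
      rw [Finsupp.degree_eq_weight_one]
      exact hf (mem_support_iff.mp hα)
    have hdiv := α.degree_add_card_le_mul_degree_div hq
    by_contra! hlt
    have := Nat.mul_le_mul_left q hlt
    rw [hαt, hσ] at hdiv
    nlinarith
  obtain ⟨δ, hδβ, hδm⟩ := β.exists_le_degree_eq m hmβ
  have hqδ : q • δ ≤ α := fun i =>
    (Nat.mul_le_mul_left q (hδβ i)).trans (Nat.mul_div_le (α i) q)
  have hsplit :
      monomial α (coeff α f) = monomial (α - q • δ) (coeff α f) * monomial δ 1 ^ q := by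
    rw [monomial_pow, monomial_mul, one_pow, mul_one, tsub_add_cancel_of_le hqδ]
  rw [hsplit]
  exact Ideal.mul_mem_left _ _ (Ideal.subset_span ⟨_, hI _ (isHomogeneous_monomial _ hδm), rfl⟩)

end MvPolynomial

theorem Ideal.map_bracketPow_le {R S F : Type*} [CommRing R] [CommRing S] [FunLike F R S]
    [RingHomClass F R S] (f : F) (I : Ideal R) (q : ℕ) :
    (bracketPow I q).map f ≤ bracketPow (I.map f) q := by
  rw [bracketPow, Ideal.map_span, Ideal.span_le]
  rintro _ ⟨_, ⟨x, hx, rfl⟩, rfl⟩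
  exact Ideal.subset_span ⟨f x, Ideal.mem_map_of_mem f hx, (map_pow f x q).symm⟩

open DirectSum in
theorem GradedRingHom.exists_forall_mem_of_forall_map_mem {A B σA σB : Type*} [CommRing A]
    [CommRing B] [SetLike σA A] [AddSubmonoidClass σA A] [SetLike σB B] [AddSubmonoidClass σB B]
    {𝒜 : ℕ → σA} {ℬ : ℕ → σB} [GradedRing 𝒜] [GradedRing ℬ] (ψ : 𝒜 →+*ᵍ ℬ)
    (hfin : ψ.toRingHom.Finite) :
    ∃ C : ℕ, ∀ (K : Ideal B) (N : ℕ), (∀ s ≥ N, ∀ f ∈ 𝒜 s, ψ f ∈ K) →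
      ∀ t ≥ N + C, ∀ y ∈ ℬ t, y ∈ K := by
  classical
  let := ψ.toRingHom.toAlgebra
  obtain ⟨T, hT⟩ := Module.finite_def.mp hfin
  set C := T.sup fun z => (decompose ℬ z).support.sup _root_.id
  refine ⟨C + 1, fun K N hK t ht y hy => ?_⟩
  obtain ⟨c, -, rfl⟩ :=
    Submodule.mem_span_finset.mp (hT ▸ Submodule.mem_top : y ∈ Submodule.span A (T : Set B))
  rw [← decompose_of_mem_same ℬ hy, decompose_sum, DFinsupp.finsetSum_apply,
    AddSubmonoidClass.coe_finsetSum]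
  refine Ideal.sum_mem _ fun z hz => ?_
  have hcz : c z • z = ∑ w ∈ (decompose ℬ z).support, ψ (c z) * (decompose ℬ z w : B) := by
    rw [← Finset.mul_sum, sum_support_decompose]
    rfl
  rw [hcz, decompose_sum, DFinsupp.finsetSum_apply, AddSubmonoidClass.coe_finsetSum]
  refine Ideal.sum_mem _ fun w hw => ?_
  have hwC : w ≤ C := (Finset.le_sup (f := _root_.id) hw).trans
    (Finset.le_sup (f := fun z => (decompose ℬ z).support.sup _root_.id) hz)
  rw [coe_decompose_mul_of_right_mem_of_le ℬ (SetLike.coe_mem _) (by omega),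
    ← map_directSumDecompose 𝒜]
  exact K.mul_mem_right _ (hK _ (by omega) _ (SetLike.coe_mem _))

theorem Ideal.exists_mul_pow_eq_zero_of_mem_minimalPrimes {R : Type*} [CommRing R]
    {Q : Ideal R} (hQ : Q ∈ minimalPrimes R) {x : R} (hx : x ∈ Q) :
    ∃ s ∉ Q, ∃ n, s * x ^ n = 0 := by
  have := hQ.isPrime
  have hrad := IsLocalization.AtPrime.radical_map_of_mem_minimalPrimes
    (Localization.AtPrime Q) Q ⊥ hQ
  have hxrad : algebraMap R (Localization.AtPrime Q) x ∈ (Ideal.map _ ⊥).radical :=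
    hrad ▸ Ideal.mem_map_of_mem _ hx
  rw [Ideal.map_bot] at hxrad
  obtain ⟨n, hn⟩ := hxrad
  rw [Ideal.mem_bot, ← map_pow, IsLocalization.map_eq_zero_iff Q.primeCompl] at hn
  obtain ⟨⟨s, hs⟩, hsx⟩ := hn
  exact ⟨s, hs, n, hsx⟩

theorem Ideal.exists_mem_forall_notMem_minimalPrimes {R : Type*} [CommRing R]
    [IsNoetherianRing R] {K : Ideal R} (hK : ∀ Q ∈ minimalPrimes R, ¬ K ≤ Q) :
    ∃ u ∈ K, ∀ Q ∈ minimalPrimes R, u ∉ Q := by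
  have hfin := minimalPrimes.finite_of_isNoetherianRing R
  have : ¬ (K : Set R) ⊆ ⋃ Q ∈ (hfin.toFinset : Set (Ideal R)), (Q : Set R) := by
    rw [Ideal.subset_union_prime ⊥ ⊥ fun Q hQ _ _ => (hfin.mem_toFinset.mp hQ).isPrime]
    rintro ⟨Q, hQ, hle⟩
    exact hK Q (hfin.mem_toFinset.mp hQ) hle
  simpa [Set.not_subset] using this

namespace HomogeneousIdeal

open DirectSum

theorem isNilpotent_of_irrelevant_le_of_mem_minimalPrimes {k R : Type*} [Field k] [CommRing R]
    [Algebra k R] (𝒜 : ℕ → Submodule k R) [GradedAlgebra 𝒜] (h0 : 𝒜 0 = 1) {Q : Ideal R}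
    (hQ : Q ∈ minimalPrimes R) (hirr : (irrelevant 𝒜).toIdeal ≤ Q) {i : ℕ} (hi : 0 < i)
    {x : R} (hx : x ∈ 𝒜 i) : IsNilpotent x := by
  obtain ⟨s, hsQ, n, hs⟩ :=
    Ideal.exists_mul_pow_eq_zero_of_mem_minimalPrimes hQ (hirr (mem_irrelevant_of_mem 𝒜 hi hx))
  -- The degree-`n i` part of `s * x ^ n = 0` reads `s₀ * x ^ n = 0`, and `s₀ = c • 1` with
  -- `c ≠ 0` because `s - s₀ ∈ R₊ ⊆ Q` while `s ∉ Q`.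
  obtain ⟨c, hc⟩ : ∃ c : k, algebraMap k R c = decompose 𝒜 s 0 :=
    Submodule.mem_one.mp (h0 ▸ SetLike.coe_mem _)
  have hc0 : c ≠ 0 := by
    rintro rfl
    exact hsQ (hirr ((mem_irrelevant_iff 𝒜 s).mpr (by rw [GradedRing.proj_apply, ← hc, map_zero])))
  have hcx : c • x ^ n = 0 := by
    have := congrArg (fun y => (decompose 𝒜 y (n • i) : R)) hs
    simp only at this
    rwa [coe_decompose_mul_of_right_mem_of_le 𝒜 (SetLike.pow_mem_graded n hx) le_rfl, tsub_self,
      ← hc, decompose_zero, DirectSum.zero_apply, ZeroMemClass.coe_zero, ← Algebra.smul_def]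
      at this
  exact ⟨n, (smul_eq_zero_iff_right hc0).mp hcx⟩

theorem toIdeal_irrelevant_le_of_forall_mem {k R : Type*} [CommSemiring k] [CommRing R]
    [Algebra k R] {𝒜 : ℕ → Submodule k R} [GradedAlgebra 𝒜] (hstd : ∀ n, 𝒜 n = 𝒜 1 ^ n)
    {Q : Ideal R} (hQ : Q.IsPrime) {c : ℕ} (hc : ∀ x ∈ 𝒜 c, x ∈ Q) :
    (irrelevant 𝒜).toIdeal ≤ Q := by
  have h1 : 𝒜 1 ≤ Q.restrictScalars k := fun x hx => by
    have := SetLike.pow_mem_graded c hx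
    rw [smul_eq_mul, mul_one] at this
    exact hQ.mem_of_pow_mem c (hc _ this)
  rw [irrelevant_eq_span, Ideal.span_le]
  refine Set.iUnion₂_subset fun i hi => ?_
  obtain ⟨j, rfl⟩ := Nat.exists_eq_add_of_lt hi
  suffices 𝒜 (0 + j + 1) ≤ Q.restrictScalars k from this
  rw [hstd, pow_succ]
  exact Submodule.mul_le.mpr fun a _ b hb => Q.mul_mem_left a (h1 hb)

end HomogeneousIdeal

open MvPolynomial HomogeneousIdeal in
theorem generic_tight_closure_bound_general
    {k : Type*} [Field k] (p : ℕ) [Fact p.Prime]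
    (d : ℕ)
    {R : Type*} [CommRing R] [IsNoetherianRing R] [Algebra k R]
    (𝒜 : ℕ → Submodule k R) [GradedAlgebra 𝒜]
    (hstd : ∀ n, 𝒜 n = 𝒜 1 ^ n)
    (φ : MvPolynomial (Fin (d + 1)) k →ₐ[k] R)
    (hφinj : Function.Injective φ)
    (hφdeg : ∀ (n : ℕ) (f : MvPolynomial (Fin (d + 1)) k),
      f.IsHomogeneous n → φ f ∈ 𝒜 n)
    (hfin : RingHom.Finite φ.toRingHom)
    (n : ℕ)
    (g : Fin n → MvPolynomial (Fin (d + 1)) k)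
    (m : ℕ)
    (hm : ∀ f : MvPolynomial (Fin (d + 1)) k, f.IsHomogeneous m →
      f ∈ Ideal.span (Set.range g)) :
    ∀ r ∈ 𝒜 (m + d),
      r ∈ tightClosure p (Ideal.span (Set.range fun i => φ (g i))) := by
  intro r hr
  set J := Ideal.span (Set.range fun i => φ (g i))
  let := MvPolynomial.gradedAlgebra (σ := Fin (d + 1)) (R := k)
  let ψ : homogeneousSubmodule (Fin (d + 1)) k →+*ᵍ 𝒜 := ⟨φ.toRingHom, hφdeg _ _⟩
  obtain ⟨C, hC⟩ := ψ.exists_forall_mem_of_forall_map_mem hfin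
  have hX : ¬ IsNilpotent (φ (X 0)) := fun h =>
    X_ne_zero (0 : Fin (d + 1)) ((IsNilpotent.map_iff hφinj).mp h).eq_zero
  obtain ⟨u, hu, hu_min⟩ := Ideal.exists_mem_forall_notMem_minimalPrimes
    (K := Ideal.span (𝒜 C)) fun Q hQ hle => hX <|
      isNilpotent_of_irrelevant_le_of_mem_minimalPrimes 𝒜 (by rw [hstd, pow_zero]) hQ
        (toIdeal_irrelevant_le_of_forall_mem hstd hQ.isPrime fun x hx => hle (Ideal.subset_span hx))
        one_pos (hφdeg 1 _ (isHomogeneous_X k 0))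
  refine ⟨u, hu_min, 0, fun e _ => ?_⟩
  have hq : 0 < p ^ e := pow_pos (Fact.out : p.Prime).pos e
  have hJ : (Ideal.span (Set.range g)).map φ = J := by
    rw [Ideal.map_span, ← Set.range_comp]
    rfl
  have hforms : ∀ s ≥ p ^ e * (m + d), ∀ f ∈ homogeneousSubmodule (Fin (d + 1)) k s,
      ψ f ∈ bracketPow J (p ^ e) := fun s hs f hf => by
    rw [← hJ]
    exact Ideal.map_bracketPow_le φ _ _ <| Ideal.mem_map_of_mem φ <|
      mem_bracketPow_of_isHomogeneous (Fintype.card_fin _) hq hm hf (by omega)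
  have hspan : Ideal.span (𝒜 C : Set R) ≤ (bracketPow J (p ^ e)).colon {r ^ p ^ e} :=
    Ideal.span_le.mpr fun x hx => Submodule.mem_colon_singleton.mpr <|
      hC _ _ hforms _ (by rw [smul_eq_mul]; omega) _
        (SetLike.mul_mem_graded hx (SetLike.pow_mem_graded _ hr))
  exact Submodule.mem_colon_singleton.mp (hspan hu)

theorem generic_tight_closure_bound
    {k : Type*} [Field k] [IsAlgClosed k] (p : ℕ) [Fact p.Prime] [CharP k p]
    (d : ℕ) (hd : 1 ≤ d)
    {R : Type*} [CommRing R] [IsNoetherianRing R] [Algebra k R]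
    (𝒜 : ℕ → Submodule k R) [GradedAlgebra 𝒜]
    (hstd : ∀ n, 𝒜 n = 𝒜 1 ^ n)
    (hfd : FiniteDimensional k (𝒜 1))
    (φ : MvPolynomial (Fin (d + 1)) k →ₐ[k] R)
    (hφinj : Function.Injective φ)
    (hφdeg : ∀ (n : ℕ) (f : MvPolynomial (Fin (d + 1)) k),
      f.IsHomogeneous n → φ f ∈ 𝒜 n)
    (hfin : RingHom.Finite φ.toRingHom)
    (n : ℕ) (hn : d + 1 ≤ n)
    (g : Fin n → MvPolynomial (Fin (d + 1)) k) (a : Fin n → ℕ)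
    (hg : ∀ i, (g i).IsHomogeneous (a i))
    (m : ℕ)
    (hm : ∀ f : MvPolynomial (Fin (d + 1)) k, f.IsHomogeneous m →
      f ∈ Ideal.span (Set.range g)) :
    ∀ r ∈ 𝒜 (m + d),
      r ∈ tightClosure p (Ideal.span (Set.range fun i => φ (g i))) :=
  generic_tight_closure_bound_general p d 𝒜 hstd φ hφinj hφdeg hfin n g m hm
end

section
/- Let k be a field and let R be a standard-graded k-algebra of Krull dimension one. Let f ∈ R be homogeneous of degree a ≥ 1 and not contained in any minimal prime of R (the genericity condition). Then there exists γ ∈ ℕ such that for every β ∈ ℕ and every m ≥ βa + γ, every homogeneous element of R of degree m lies in the ideal (f^β). -/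
/-!
The homogeneous core of a prime `P ∋ f` is a homogeneous prime containing `f`, so it is not
minimal, hence maximal because `dim R ≤ 1`. A homogeneous maximal ideal contains every element of
positive degree (look at the degree-zero part of `1 = y x + q`), so `R₊ ⊆ √(f)` and, `R` being
Noetherian, `R₊ ^ γ ⊆ (f)` for some `γ`. Thus an element of degree `m ≥ γ` is `f s`, where `s`
may be taken homogeneous of degree `m - a`; induction on `β` finishes the proof.
-/

open DirectSum HomogeneousIdeal

section GradedRing

variable {R σ : Type*} [CommRing R] [SetLike σ R] [AddSubmonoidClass σ R]
  (𝒜 : ℕ → σ) [GradedRing 𝒜]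

theorem Ideal.IsHomogeneous.irrelevant_le_of_isMaximal {Q : Ideal R}
    (hQ : Q.IsHomogeneous 𝒜) (hmax : Q.IsMaximal) : (irrelevant 𝒜).toIdeal ≤ Q := by
  rw [irrelevant_eq_span, Ideal.span_le]
  simp only [Set.iUnion_subset_iff]
  intro i hi x hx
  by_contra hxQ
  obtain ⟨y, q, hq, hyxq⟩ := hmax.exists_inv hxQ
  have hyx : (decompose 𝒜 (y * x) 0 : R) = 0 :=
    coe_decompose_mul_of_right_mem_of_not_le 𝒜 hx (by omega)
  have h1 : (decompose 𝒜 (1 : R) 0 : R) = 1 := decompose_of_mem_same 𝒜 SetLike.GradedOne.one_mem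
  apply hmax.ne_top
  rw [Ideal.eq_top_iff_one, ← h1, ← hyxq, decompose_add, DirectSum.add_apply,
    AddMemClass.coe_add, hyx, zero_add]
  exact hQ 0 hq

theorem irrelevant_le_of_mem_of_forall_notMem_minimalPrimes [Ring.KrullDimLE 1 R] {f : R}
    (hf : SetLike.IsHomogeneousElem 𝒜 f) (hgen : ∀ P ∈ minimalPrimes R, f ∉ P)
    {P : Ideal R} (hP : P.IsPrime) (hfP : f ∈ P) : (irrelevant 𝒜).toIdeal ≤ P := by
  set Q := (P.homogeneousCore 𝒜).toIdeal
  have hQ : Q.IsPrime := hP.homogeneousCore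
  have hfQ : f ∈ Q := Ideal.mem_homogeneousCore_of_homogeneous_of_mem hf hfP
  have hQmin : Q ∉ minimalPrimes R := fun hmin => hgen Q hmin hfQ
  have hQmax : Q.IsMaximal := (Ring.krullDimLE_one_iff.1 ‹_› Q hQ).resolve_left hQmin
  exact ((P.homogeneousCore 𝒜).isHomogeneous.irrelevant_le_of_isMaximal 𝒜 hQmax).trans
    (Ideal.toIdeal_homogeneousCore_le 𝒜 P)

theorem irrelevant_le_radical_span_singleton [Ring.KrullDimLE 1 R] {f : R}
    (hf : SetLike.IsHomogeneousElem 𝒜 f) (hgen : ∀ P ∈ minimalPrimes R, f ∉ P) :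
    (irrelevant 𝒜).toIdeal ≤ (Ideal.span {f}).radical := by
  rw [Ideal.radical_eq_sInf]
  exact le_sInf fun P ⟨hfP, hP⟩ =>
    irrelevant_le_of_mem_of_forall_notMem_minimalPrimes 𝒜 hf hgen hP
      (hfP (Ideal.mem_span_singleton_self f))

theorem exists_mem_mul_eq_of_mem_span_singleton {f r : R} {a n : ℕ} (hf : f ∈ 𝒜 a)
    (hr : r ∈ 𝒜 (a + n)) (hfr : r ∈ Ideal.span {f}) : ∃ s ∈ 𝒜 n, f * s = r := by
  obtain ⟨s, rfl⟩ := Ideal.mem_span_singleton.1 hfr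
  refine ⟨decompose 𝒜 s n, SetLike.coe_mem _, ?_⟩
  rw [← coe_decompose_mul_add_of_left_mem 𝒜 hf, decompose_of_mem_same 𝒜 hr]

theorem mem_span_singleton_pow_of_le_degree {f : R} {a γ : ℕ} (hf : f ∈ 𝒜 a)
    (hγ : ∀ m, γ ≤ m → ∀ r ∈ 𝒜 m, r ∈ Ideal.span {f}) :
    ∀ β m, β * a + γ ≤ m → ∀ r ∈ 𝒜 m, r ∈ Ideal.span {f ^ β} := by
  intro β
  induction β with
  | zero => simp
  | succ β ih =>
    intro m hm r hr
    obtain ⟨n, rfl⟩ := Nat.exists_eq_add_of_le (show a ≤ m by nlinarith)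
    obtain ⟨s, hs, rfl⟩ :=
      exists_mem_mul_eq_of_mem_span_singleton 𝒜 hf hr (hγ _ (by nlinarith) r hr)
    obtain ⟨t, rfl⟩ := Ideal.mem_span_singleton.1 (ih n (by nlinarith) s hs)
    exact Ideal.mem_span_singleton.2 ⟨t, by ring⟩

end GradedRing

theorem Submodule.pow_le_restrictScalars_pow {k R : Type*} [CommSemiring k] [CommRing R]
    [Algebra k R] {V : Submodule k R} {I : Ideal R} (h : V ≤ I.restrictScalars k) (m : ℕ) :
    V ^ m ≤ (I ^ m).restrictScalars k := by
  rcases m.eq_zero_or_pos with rfl | hm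
  · simp
  · rw [Submodule.restrictScalars_pow hm.ne']
    exact pow_le_pow_left' h m

theorem dimension_one_ideal_bound_general
    {k : Type*} [Field k]
    {R : Type*} [CommRing R] [IsNoetherianRing R] [Algebra k R]
    (𝒜 : ℕ → Submodule k R) [GradedAlgebra 𝒜]
    (hstd : ∀ n, 𝒜 n = 𝒜 1 ^ n)
    (hdim : ringKrullDim R = 1)
    (f : R) (a : ℕ) (hf : f ∈ 𝒜 a)
    (hgen : ∀ P ∈ minimalPrimes R, f ∉ P) :
    ∃ γ : ℕ, ∀ β : ℕ, ∀ m : ℕ, β * a + γ ≤ m →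
      ∀ r ∈ 𝒜 m, r ∈ Ideal.span {f ^ β} := by
  have : Ring.KrullDimLE 1 R := ⟨hdim.le⟩
  obtain ⟨γ, hγ⟩ := Ideal.exists_pow_le_of_le_radical_of_fg
    (irrelevant_le_radical_span_singleton 𝒜 ⟨a, hf⟩ hgen) (IsNoetherian.noetherian _)
  have h𝒜₁ : 𝒜 1 ≤ (irrelevant 𝒜).toIdeal.restrictScalars k :=
    fun x hx => mem_irrelevant_of_mem 𝒜 one_pos hx
  refine ⟨γ, mem_span_singleton_pow_of_le_degree 𝒜 hf fun m hm r hr => hγ ?_⟩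
  exact Ideal.pow_le_pow_right hm (Submodule.pow_le_restrictScalars_pow h𝒜₁ m (hstd m ▸ hr))

theorem dimension_one_ideal_bound
    {k : Type*} [Field k]
    {R : Type*} [CommRing R] [IsNoetherianRing R] [Algebra k R]
    (𝒜 : ℕ → Submodule k R) [GradedAlgebra 𝒜]
    (hstd : ∀ n, 𝒜 n = 𝒜 1 ^ n)
    (hfd : FiniteDimensional k (𝒜 1))
    (hdim : ringKrullDim R = 1)
    (f : R) (a : ℕ) (ha : 1 ≤ a) (hf : f ∈ 𝒜 a)
    (hgen : ∀ P ∈ minimalPrimes R, f ∉ P) :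
    ∃ γ : ℕ, ∀ β : ℕ, ∀ m : ℕ, β * a + γ ≤ m →
      ∀ r ∈ 𝒜 m, r ∈ Ideal.span {f ^ β} :=
  dimension_one_ideal_bound_general 𝒜 hstd hdim f a hf hgen
end

section
/- Fix natural numbers n ≥ 2 and a ≥ 1 and let F be the Fröberg function for n forms of constant degree a in 2 variables (d = 1), i.e. F(m) = Σ_{s=0}^{n} (−1)^s C(n,s)·C°(1 + m − s·a, 1). Set m_0 = ⌈n·a/(n−1)⌉ − 1. Then F(m) > 0 for every natural number m < m_0 and F(m_0) ≤ 0; that is, m_0 is the smallest zero of F^+ = max(F, 0). -/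
/-!
For `d = 1` we have `C°(N, 1) = max N 0`, and for `m < 2a` only the terms `s = 0, 1` survive, so
`F(m) = (m + 1) - n · max (m + 1 - a) 0 = min (m + 1) (n a - (n - 1)(m + 1))`.
Hence `F(m) > 0` exactly when `(n - 1)(m + 1) < n a`, i.e. when `m + 1 < ⌈n a / (n - 1)⌉ = m₀ + 1`;
and `m₀ < 2a` because `n a ≤ 2a (n - 1)`.
-/

open scoped BigOperators

/-- Modified binomial coefficient `C°(N, K)`: the usual binomial coefficient
`C(N, K)` if `N ≥ K ≥ 0`, and `0` otherwise. -/
def cBinom (N : ℤ) (K : ℕ) : ℤ :=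
  if (K : ℤ) ≤ N then (N.toNat.choose K : ℤ) else 0

/-- The Fröberg function for `n` forms of constant degree `a` in `d + 1` variables:
`F(m) = Σ_{s=0}^{n} (−1)^s C(n,s) · C°(d + m − s·a, d)`. -/
def froberg (n d a : ℕ) (m : ℕ) : ℤ :=
  ∑ s ∈ Finset.range (n + 1),
    (-1 : ℤ) ^ s * (n.choose s : ℤ) * cBinom ((d : ℤ) + m - s * a) d

open Finset

lemma cBinom_of_lt {N : ℤ} {K : ℕ} (h : N < K) : cBinom N K = 0 :=
  if_neg (not_le.mpr h)

lemma cBinom_one (N : ℤ) : cBinom N 1 = max N 0 := by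
  unfold cBinom
  split_ifs with h
  · rw [Nat.choose_one_right, Int.toNat_of_nonneg (by omega), max_eq_left (by omega)]
  · rw [max_eq_right (by omega)]

lemma froberg_eq_sum_range_of_lt {n d a m k : ℕ} (hk : k ≤ n + 1) (hm : m < k * a) :
    froberg n d a m = ∑ s ∈ range k,
      (-1 : ℤ) ^ s * (n.choose s : ℤ) * cBinom ((d : ℤ) + m - s * a) d := by
  refine (sum_subset (range_subset_range.mpr hk) fun s _ hs => ?_).symm
  have hks : k * a ≤ s * a := Nat.mul_le_mul_right a (by simpa using hs)
  rw [cBinom_of_lt (by omega), mul_zero]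

lemma froberg_one_eq_min {n a m : ℕ} (hn : 1 ≤ n) (hm : m < 2 * a) :
    froberg n 1 a m = min ((m : ℤ) + 1) (n * a - (n - 1) * (m + 1)) := by
  rw [froberg_eq_sum_range_of_lt (k := 2) (by omega) (by omega)]
  simp only [sum_range_succ, sum_range_zero, cBinom_one, Nat.choose_zero_right,
    Nat.choose_one_right, Nat.cast_zero, Nat.cast_one, zero_mul, one_mul, sub_zero, pow_zero,
    pow_one, zero_add]
  rcases le_total ((1 : ℤ) + m - a) 0 with h | h
  · rw [max_eq_right h, min_eq_left (by nlinarith), max_eq_left (by positivity)]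
    ring
  · rw [max_eq_left h, min_eq_right (by nlinarith), max_eq_left (by positivity)]
    ring

theorem froberg_smallest_zero_dim_two_general (n a : ℕ) (hn : 2 ≤ n)
    (m₀ : ℕ) (hm₀ : (m₀ : ℤ) = ⌈(n * a : ℚ) / ((n : ℚ) - 1)⌉ - 1) :
    (∀ m : ℕ, m < m₀ → 0 < froberg n 1 a m) ∧ froberg n 1 a m₀ ≤ 0 := by
  have hn_int : (2 : ℤ) ≤ n := by exact_mod_cast hn
  have hn_rat : (0 : ℚ) < n - 1 := by
    have : (2 : ℚ) ≤ n := by exact_mod_cast hn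
    linarith
  have hm₀_succ_le (z : ℤ) : (m₀ : ℤ) + 1 ≤ z ↔ (n : ℤ) * a ≤ z * (n - 1) := by
    rw [show (m₀ : ℤ) + 1 = ⌈(n * a : ℚ) / ((n : ℚ) - 1)⌉ by omega, Int.ceil_le,
      div_le_iff₀ hn_rat]
    exact_mod_cast Iff.rfl
  have hm₀_lt : m₀ < 2 * a := by
    have := (hm₀_succ_le (2 * a)).mpr (by nlinarith)
    omega
  refine ⟨fun m hm => ?_, ?_⟩
  · have hlt : (n - 1) * ((m : ℤ) + 1) < n * a := by
      have := (hm₀_succ_le (m + 1)).not.mp (by omega)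
      linarith
    rw [froberg_one_eq_min (by omega) (by omega)]
    exact lt_min (by positivity) (by linarith)
  · have hle : (n : ℤ) * a ≤ (n - 1) * (m₀ + 1) := by
      have := (hm₀_succ_le (m₀ + 1)).mp le_rfl
      linarith
    rw [froberg_one_eq_min (by omega) hm₀_lt]
    exact min_le_of_right_le (by linarith)

theorem froberg_smallest_zero_dim_two (n a : ℕ) (hn : 2 ≤ n) (ha : 1 ≤ a)
    (m₀ : ℕ) (hm₀ : (m₀ : ℤ) = ⌈(n * a : ℚ) / ((n : ℚ) - 1)⌉ - 1) :
    (∀ m : ℕ, m < m₀ → 0 < froberg n 1 a m) ∧ froberg n 1 a m₀ ≤ 0 :=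
  froberg_smallest_zero_dim_two_general n a hn m₀ hm₀
end

section
/- Let k be a field of characteristic p > 0, let R = k[x,y]/(xy), and let a, b ∈ k be nonzero. Let I = (a·x̄ + b·ȳ) ⊆ R, where x̄, ȳ denote the residue classes of x and y. Then: (1) x̄ does not belong to the Frobenius closure I^F; that is, for every q = p^e one has x̄^q ∉ I^{[q]} = (a^q x̄^q + b^q ȳ^q); and (2) letting S denote the integral closure of R in its total ring of fractions (the localization of R at its nonzerodivisors), the image of x̄ in S belongs to the extended ideal I·S. -/
open MvPolynomial

/-- Frobenius closure of an ideal in a ring of characteristic `p`. -/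
def frobeniusClosure {R : Type*} [CommRing R] (p : ℕ) (I : Ideal R) : Set R :=
  {x | ∃ e : ℕ, x ^ p ^ e ∈ bracketPow I (p ^ e)}

/-- The ring `R = k[x,y]/(xy)`. -/
noncomputable abbrev Rxy (k : Type*) [Field k] : Type _ :=
  MvPolynomial (Fin 2) k ⧸ Ideal.span {(X 0 * X 1 : MvPolynomial (Fin 2) k)}

/-- The residue class `x̄` of `x` in `k[x,y]/(xy)`. -/
noncomputable abbrev xbar (k : Type*) [Field k] : Rxy k :=
  Ideal.Quotient.mk _ (X 0 : MvPolynomial (Fin 2) k)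

/-- The residue class `ȳ` of `y` in `k[x,y]/(xy)`. -/
noncomputable abbrev ybar (k : Type*) [Field k] : Rxy k :=
  Ideal.Quotient.mk _ (X 1 : MvPolynomial (Fin 2) k)

/-!
Write `g = a x̄ + b ȳ`. Since `I = (g)` is principal, `I^{[q]} = (g^q)`. If `x̄^q = c g^q`, restrict
to the two branches of the node: on `y = 0` this reads `x^q = c(x,0) a^q x^q`, so `c(x,0) a^q = 1`;
on `x = 0` it reads `0 = c(0,y) b^q y^q`, so `c(0,y) = 0`. Both branches pass through the origin,
where `c` would then take the values `a^{-q}` and `0`.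

On the other hand `g` is a nonzerodivisor and `x̄ ȳ = 0` gives `x̄² = a⁻¹ x̄ g`, so `t = x̄ / g` in
the total ring of fractions satisfies `t² = a⁻¹ t`. Hence `t` lies in the normalization `S`, and
`x̄ = t g ∈ I S`.
-/

theorem bracketPow_span_singleton {R : Type*} [CommRing R] (f : R) (q : ℕ) :
    bracketPow (Ideal.span {f}) q = Ideal.span {f ^ q} := by
  apply le_antisymm
  · rw [bracketPow, Ideal.span_le]
    rintro _ ⟨g, hg, rfl⟩
    obtain ⟨c, rfl⟩ := Ideal.mem_span_singleton'.mp hg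
    exact Ideal.mem_span_singleton'.mpr ⟨c ^ q, (mul_pow c f q).symm⟩
  · rw [Ideal.span_singleton_le_iff_mem]
    exact Ideal.subset_span ⟨f, Ideal.mem_span_singleton_self f, rfl⟩

theorem isIntegral_of_mul_self_eq_algebraMap_mul {R S : Type*} [CommRing R] [CommRing S]
    [Algebra R S] {t : S} {c : R} (h : t * t = algebraMap R S c * t) : IsIntegral R t := by
  refine ⟨(Polynomial.X - Polynomial.C c) * Polynomial.X,
    (Polynomial.monic_X_sub_C c).mul Polynomial.monic_X, ?_⟩
  rw [Polynomial.eval₂_mul, Polynomial.eval₂_sub, Polynomial.eval₂_X, Polynomial.eval₂_C, sub_mul,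
    h, sub_self]

theorem algebraMap_mem_map_integralClosure_of_mul_self_eq {R K : Type*} [CommRing R]
    [CommRing K] [Algebra R K] {x g c : R} (hg : IsUnit (algebraMap R K g))
    (h : x * x = c * x * g) :
    algebraMap R (integralClosure R K) x ∈
      (Ideal.span {g}).map (algebraMap R (integralClosure R K)) := by
  obtain ⟨u, hu⟩ := hg
  set t : K := algebraMap R K x * ↑u⁻¹
  have htt : t * t = algebraMap R K c * t := by
    have h' := congrArg (algebraMap R K) h
    simp only [map_mul, ← hu] at h'
    linear_combination (↑u⁻¹ : K) ^ 2 * h' + algebraMap R K c * t * u.mul_inv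
  have hx : algebraMap R (integralClosure R K) x =
      ⟨t, isIntegral_of_mul_self_eq_algebraMap_mul htt⟩ * algebraMap R _ g := by
    apply Subtype.ext
    change algebraMap R K x = t * algebraMap R K g
    rw [← hu, mul_assoc, u.inv_mul, mul_one]
  rw [Ideal.map_span, Set.image_singleton, hx]
  exact Ideal.mul_mem_left _ _ (Ideal.mem_span_singleton_self _)

namespace MvPolynomial

variable {k σ : Type*} [Field k]

theorem not_X_dvd_C_mul_X_add_C_mul_X {i j : σ} (hij : i ≠ j) (a : k) {b : k} (hb : b ≠ 0) :
    ¬ X i ∣ C a * X i + C b * X j := by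
  rw [dvd_add_right (dvd_mul_left _ _), X_prime.dvd_mul, X_dvd_X]
  rintro (h | rfl)
  · exact X_prime.not_isUnit (isUnit_of_dvd_unit h ((Ne.isUnit hb).map C))
  · exact hij rfl

theorem isRelPrime_X_X {R : Type*} [CommRing R] [IsDomain R] {i j : σ} (hij : i ≠ j) :
    IsRelPrime (X i : MvPolynomial σ R) (X j) :=
  X_prime.irreducible.isRelPrime_iff_not_dvd.mpr (X_dvd_X.not.mpr hij)

end MvPolynomial

namespace Rxy

variable {k : Type*} [Field k]

noncomputable def lift {A : Type*} [CommRing A] [Algebra k A] (v : Fin 2 → A)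
    (hv : v 0 * v 1 = 0) : Rxy k →ₐ[k] A :=
  Ideal.Quotient.liftₐ _ (aeval v) fun P hP => by
    obtain ⟨c, rfl⟩ := Ideal.mem_span_singleton'.mp hP
    simp [hv]

@[simp]
theorem lift_mk {A : Type*} [CommRing A] [Algebra k A] (v : Fin 2 → A) (hv : v 0 * v 1 = 0)
    (P : MvPolynomial (Fin 2) k) : lift v hv (Ideal.Quotient.mk _ P) = aeval v P :=
  rfl

theorem eval_zero_lift (v : Fin 2 → Polynomial k) (hv : v 0 * v 1 = 0)
    (hv₀ : ∀ i, (v i).eval 0 = 0) (r : Rxy k) :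
    (lift v hv r).eval 0 = lift (0 : Fin 2 → k) (mul_zero 0) r := by
  obtain ⟨P, rfl⟩ := Ideal.Quotient.mk_surjective r
  rw [lift_mk, lift_mk, ← Polynomial.coe_aeval_eq_eval, comp_aeval_apply]
  congr
  funext i
  simp [hv₀]

@[simp]
theorem lift_xbar {A : Type*} [CommRing A] [Algebra k A] (v : Fin 2 → A) (hv : v 0 * v 1 = 0) :
    lift v hv (xbar k) = v 0 :=
  aeval_X v 0

@[simp]
theorem lift_ybar {A : Type*} [CommRing A] [Algebra k A] (v : Fin 2 → A) (hv : v 0 * v 1 = 0) :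
    lift v hv (ybar k) = v 1 :=
  aeval_X v 1

theorem mk_C_mul_X_add_C_mul_X (a b : k) :
    Ideal.Quotient.mk _ (C a * X 0 + C b * X 1) =
      algebraMap k (Rxy k) a * xbar k + algebraMap k (Rxy k) b * ybar k :=
  rfl

noncomputable def toXAxis : Rxy k →ₐ[k] Polynomial k :=
  lift ![Polynomial.X, 0] (by simp)

noncomputable def toYAxis : Rxy k →ₐ[k] Polynomial k :=
  lift ![0, Polynomial.X] (by simp)

noncomputable def evalOrigin : Rxy k →ₐ[k] k :=
  lift 0 (mul_zero 0)

@[simp]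
theorem toXAxis_xbar : toXAxis (xbar k) = Polynomial.X :=
  lift_xbar _ _

@[simp]
theorem toXAxis_ybar : toXAxis (ybar k) = 0 :=
  lift_ybar _ _

@[simp]
theorem toYAxis_xbar : toYAxis (xbar k) = 0 :=
  lift_xbar _ _

@[simp]
theorem toYAxis_ybar : toYAxis (ybar k) = Polynomial.X :=
  lift_ybar _ _

theorem eval_zero_toXAxis (r : Rxy k) : (toXAxis r).eval 0 = evalOrigin r :=
  eval_zero_lift _ _ (by simp) r

theorem eval_zero_toYAxis (r : Rxy k) : (toYAxis r).eval 0 = evalOrigin r :=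
  eval_zero_lift _ _ (by simp) r

theorem xbar_mul_ybar : xbar k * ybar k = 0 := by
  rw [← map_mul, Ideal.Quotient.eq_zero_iff_mem]
  exact Ideal.mem_span_singleton_self _

theorem xbar_pow_notMem_span_singleton_pow {a b : k} (hb : b ≠ 0) {n : ℕ} (hn : n ≠ 0) :
    xbar k ^ n ∉ Ideal.span {Ideal.Quotient.mk _ (C a * X 0 + C b * X 1) ^ n} := by
  intro h
  obtain ⟨c, hc⟩ := Ideal.mem_span_singleton'.mp h
  rw [mk_C_mul_X_add_C_mul_X] at hc
  have on_x_axis := congrArg toXAxis hc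
  have on_y_axis := congrArg toYAxis hc
  simp only [map_mul, map_pow, map_add, AlgHom.commutes, Polynomial.algebraMap_eq, toXAxis_xbar,
    toXAxis_ybar, toYAxis_xbar, toYAxis_ybar, mul_zero, add_zero, zero_add, zero_pow hn]
    at on_x_axis on_y_axis
  have unit_on_x_axis : toXAxis c * Polynomial.C a ^ n = 1 :=
    mul_right_cancel₀ (pow_ne_zero n Polynomial.X_ne_zero)
      (by rw [mul_assoc, ← mul_pow, on_x_axis, one_mul])
  have zero_on_y_axis : toYAxis c = 0 := by
    simpa [hb, hn] using on_y_axis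
  have := congrArg (Polynomial.eval 0) unit_on_x_axis
  rw [Polynomial.eval_mul, eval_zero_toXAxis, ← eval_zero_toYAxis, zero_on_y_axis] at this
  simp at this

theorem mk_C_mul_X_add_C_mul_X_mem_nonZeroDivisors {a b : k} (ha : a ≠ 0) (hb : b ≠ 0) :
    Ideal.Quotient.mk _ (C a * X 0 + C b * X 1) ∈ nonZeroDivisors (Rxy k) := by
  rw [mem_nonZeroDivisors_iff_right]
  intro r hr
  obtain ⟨P, rfl⟩ := Ideal.Quotient.mk_surjective r
  rw [← map_mul, Ideal.Quotient.eq_zero_iff_mem, Ideal.mem_span_singleton] at hr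
  rw [Ideal.Quotient.eq_zero_iff_mem, Ideal.mem_span_singleton]
  have h₀ : X 0 ∣ P := (X_prime.dvd_or_dvd (dvd_of_mul_right_dvd hr)).resolve_right
    (not_X_dvd_C_mul_X_add_C_mul_X (by decide) a hb)
  have h₁ : X 1 ∣ P := (X_prime.dvd_or_dvd (dvd_of_mul_left_dvd hr)).resolve_right
    (by rw [add_comm]; exact not_X_dvd_C_mul_X_add_C_mul_X (by decide) b ha)
  exact (isRelPrime_X_X (by decide)).mul_dvd h₀ h₁

theorem xbar_mul_xbar {a : k} (ha : a ≠ 0) (b : k) :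
    xbar k * xbar k =
      algebraMap k (Rxy k) a⁻¹ * xbar k * Ideal.Quotient.mk _ (C a * X 0 + C b * X 1) := by
  have hinv : algebraMap k (Rxy k) a⁻¹ * algebraMap k (Rxy k) a = 1 := by
    rw [← map_mul, inv_mul_cancel₀ ha, map_one]
  rw [mk_C_mul_X_add_C_mul_X]
  linear_combination (-(xbar k * xbar k)) * hinv -
    algebraMap k (Rxy k) a⁻¹ * algebraMap k (Rxy k) b * xbar_mul_ybar (k := k)

end Rxy

theorem frobenius_closure_not_commute_with_normalization_general
    {k : Type*} [Field k] (p : ℕ) [Fact p.Prime]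
    (a b : k) (ha : a ≠ 0) (hb : b ≠ 0) :
    (∀ e : ℕ,
      (xbar k) ^ p ^ e ∉
        bracketPow (Ideal.span {Ideal.Quotient.mk _
          (C a * X 0 + C b * X 1 : MvPolynomial (Fin 2) k)}) (p ^ e)) ∧
    (algebraMap (Rxy k) (integralClosure (Rxy k) (FractionRing (Rxy k))) (xbar k) ∈
      (Ideal.span {Ideal.Quotient.mk _
          (C a * X 0 + C b * X 1 : MvPolynomial (Fin 2) k)}).map
        (algebraMap (Rxy k) (integralClosure (Rxy k) (FractionRing (Rxy k))))) := by
  refine ⟨fun e => ?_, ?_⟩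
  · rw [bracketPow_span_singleton, ← map_pow]
    exact Rxy.xbar_pow_notMem_span_singleton_pow hb (pow_ne_zero e (Fact.out : p.Prime).ne_zero)
  · exact algebraMap_mem_map_integralClosure_of_mul_self_eq
      (IsLocalization.map_units _ ⟨_, Rxy.mk_C_mul_X_add_C_mul_X_mem_nonZeroDivisors ha hb⟩)
      (Rxy.xbar_mul_xbar ha b)

theorem frobenius_closure_not_commute_with_normalization
    {k : Type*} [Field k] (p : ℕ) [Fact p.Prime] [CharP k p]
    (a b : k) (ha : a ≠ 0) (hb : b ≠ 0) :
    (∀ e : ℕ,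
      (xbar k) ^ p ^ e ∉
        bracketPow (Ideal.span {Ideal.Quotient.mk _
          (C a * X 0 + C b * X 1 : MvPolynomial (Fin 2) k)}) (p ^ e)) ∧
    (algebraMap (Rxy k) (integralClosure (Rxy k) (FractionRing (Rxy k))) (xbar k) ∈
      (Ideal.span {Ideal.Quotient.mk _
          (C a * X 0 + C b * X 1 : MvPolynomial (Fin 2) k)}).map
        (algebraMap (Rxy k) (integralClosure (Rxy k) (FractionRing (Rxy k))))) :=
  frobenius_closure_not_commute_with_normalization_general p a b ha hb
end
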